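/- arXiv:1104.4594 — 2 statements merged into one kernel-verified Lean document; each statement's English description precedes it below -/
import Mathlib

section
/- Let F = ℚ(y) with y⁸ = −15 and L = ℚ(z) with z⁸ = −240. Then the integral trace forms of F and L are not equivalent: there is no ℤ-linear isomorphism O_F → O_L preserving the bilinear form (x,y) ↦ trace(xy). -/
open NumberField Module

/-- Two number fields have equivalent integral trace forms if there is a `ℤ`-linear
isomorphism of the rings of integers preserving the trace pairing `(x, y) ↦ tr(x * y)`. -/
def IntTraceEquiv (F L : Type*) [Field F] [NumberField F] [Field L] [NumberField L] : Prop :=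
  ∃ e : 𝓞 F ≃ₗ[ℤ] 𝓞 L, ∀ x y : 𝓞 F,
    Algebra.intTrace ℤ (𝓞 L) (e x * e y) = Algebra.intTrace ℤ (𝓞 F) (x * y)

/-!
The element `2 / (1 - y) = (1 + y + ⋯ + y⁷) / 8` of `𝓞 F` generates `F`, and its minimal
polynomial has `X⁷`-coefficient `-1`, so its trace is `1`. In `𝓞 L`, on the other hand,
`z² = 2s` with `s` prime to `2` (as `s⁴ = -15`), so multiplication by `z` on `𝓞 L / 2` has kernel
equal to its image. Over the field `𝔽₂` this yields a linear map `h` with `z h + h z = 1`, whence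
the trace of multiplication by any `w` is `tr (w z h) + tr (w h z) = 2 tr (w z h) = 0`. So all
traces on `𝓞 L` are even, and an isometry would carry the odd value `tr (1 · 2 / (1 - y))` to an
even one.
-/

namespace LinearMap

variable {R M : Type*} [CommRing R] [AddCommGroup M] [Module R M]

theorem trace_eq_two_mul_of_commute_of_mul_add_mul_eq_one {f g h : Module.End R M}
    (hfg : Commute f g) (hgh : g * h + h * g = 1) : trace R M f = 2 * trace R M (f * g * h) := by
  have hcyc : trace R M (f * h * g) = trace R M (f * g * h) := by
    rw [trace_mul_comm, ← mul_assoc, ← hfg.eq]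
  calc trace R M f = trace R M (f * (g * h + h * g)) := by rw [hgh, mul_one]
    _ = 2 * trace R M (f * g * h) := by
      rw [mul_add, map_add, ← mul_assoc, ← mul_assoc, hcyc, two_mul]

variable {K V : Type*} [Field K] [AddCommGroup V] [Module K V]

theorem exists_mul_add_mul_eq_one_of_ker_eq_range {g : Module.End K V} (hg : ker g = range g) :
    ∃ h : Module.End K V, g * h + h * g = 1 := by
  obtain ⟨s, hs⟩ := g.rangeRestrict.exists_rightInverse_of_surjective g.range_rangeRestrict
  have hgs (i : range g) : g (s i) = i := congr_arg Subtype.val (LinearMap.congr_fun hs i)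
  have hgg (v : V) : g.rangeRestrict (g v) = 0 :=
    Subtype.ext (mem_ker.1 (hg.ge (mem_range_self g v)))
  let k : V →ₗ[K] range g := codRestrict (range g) (id - s ∘ₗ g.rangeRestrict) fun v =>
    hg.le (mem_ker.2 (by simp [hgs]))
  refine ⟨s ∘ₗ k, LinearMap.ext fun v => ?_⟩
  have hkg (v : V) : k (g v) = g.rangeRestrict v := Subtype.ext (by simp [k, hgg])
  simp [hkg, k, hgs]

end LinearMap

theorem exists_eq_mul_add_two_mul_of_dvd {B : Type*} [CommRing B] [IsDomain B] {Z S x : B}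
    (hZ : Z ≠ 0) (hZS : Z ^ 2 = 2 * S) (hS : IsCoprime S 2) (hx : 2 ∣ Z * x) :
    ∃ y b, x = Z * y + 2 * b := by
  obtain ⟨c, hc⟩ := hx
  obtain ⟨a, b, hab⟩ := hS
  have haSx : a * S * x = Z * (a * c) := by
    refine mul_left_cancel₀ hZ ?_
    linear_combination (a * S) * hc - a * c * hZS
  exact ⟨a * c, b * x, by linear_combination (-x) * hab + haSx⟩

open Ideal in
theorem two_dvd_intTrace_of_sq_eq_two_mul {B : Type*} [CommRing B] [IsDomain B]
    [IsIntegrallyClosed B] [Module.Finite ℤ B] [Module.IsTorsionFree ℤ B] {Z S : B}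
    (hZ : Z ≠ 0) (hZS : Z ^ 2 = 2 * S) (hS : IsCoprime S 2) (w : B) :
    2 ∣ Algebra.intTrace ℤ B w := by
  -- written with `((2 : ℕ) : ℤ)` so that `Int.ideal_span_isMaximal_of_prime` applies
  let p : Ideal ℤ := span {((2 : ℕ) : ℤ)}
  let := Quotient.field p
  let mk := Ideal.Quotient.mk (p.map (algebraMap ℤ B))
  have hmk (x : B) : mk x = 0 ↔ 2 ∣ x := by
    simp [mk, p, Quotient.eq_zero_iff_mem, map_span, mem_span_singleton]
  let g := Algebra.lmul (ℤ ⧸ p) (B ⧸ p.map (algebraMap ℤ B)) (mk Z)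
  have hg : LinearMap.ker g = LinearMap.range g := by
    refine le_antisymm (fun v hv => ?_) ?_
    · obtain ⟨x, rfl⟩ := Ideal.Quotient.mk_surjective v
      obtain ⟨y, b, rfl⟩ := exists_eq_mul_add_two_mul_of_dvd hZ hZS hS
        ((hmk _).1 (by rw [map_mul]; exact hv))
      refine ⟨mk y, ?_⟩
      change mk Z * mk y = mk (Z * y + 2 * b)
      rw [map_add, map_mul, (hmk _).2 (dvd_mul_right 2 b), add_zero]
    · rintro _ ⟨v, rfl⟩
      change mk Z * (mk Z * v) = 0
      rw [← mul_assoc, ← map_mul, ← sq, hZS, (hmk _).2 (dvd_mul_right 2 S), zero_mul]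
  obtain ⟨h, hgh⟩ := LinearMap.exists_mul_add_mul_eq_one_of_ker_eq_range hg
  have htr := Algebra.trace_quotient_eq_of_isDedekindDomain B p w
  rw [Algebra.trace_apply,
    LinearMap.trace_eq_two_mul_of_commute_of_mul_add_mul_eq_one ((Commute.all _ _).map _) hgh]
    at htr
  have h2 : (2 : ℤ ⧸ p) = 0 := by
    simpa using Quotient.eq_zero_iff_mem.2 (mem_span_singleton_self ((2 : ℕ) : ℤ))
  rw [h2, zero_mul, eq_comm, Quotient.eq_zero_iff_mem, mem_span_singleton] at htr
  exact_mod_cast htr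

theorem two_dvd_intTrace_of_pow_eight_eq {L : Type*} [Field L] [NumberField L] {z : L}
    (hz : z ^ 8 = -240) (w : 𝓞 L) : 2 ∣ Algebra.intTrace ℤ (𝓞 L) w := by
  have hS4 : (z ^ 2 / 2) ^ 4 = -15 := by
    rw [div_pow, ← pow_mul, hz]; norm_num
  have hZint : IsIntegral ℤ z := .of_pow (n := 8) (by norm_num) <| by
    simpa [hz] using isIntegral_algebraMap (R := ℤ) (A := L) (x := -240)
  have hSint : IsIntegral ℤ (z ^ 2 / 2) := .of_pow (n := 4) (by norm_num) <| by
    simpa [hS4] using isIntegral_algebraMap (R := ℤ) (A := L) (x := -15)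
  let Z : 𝓞 L := ⟨z, hZint⟩
  let S : 𝓞 L := ⟨z ^ 2 / 2, hSint⟩
  have hZ : Z ≠ 0 := by
    intro h
    have hz0 : z = 0 := congrArg (algebraMap (𝓞 L) L) h
    rw [hz0] at hz
    norm_num at hz
  have hZS : Z ^ 2 = 2 * S :=
    RingOfIntegers.ext (show z ^ 2 = 2 * (z ^ 2 / 2) by ring)
  have hS : S ^ 4 = -15 := RingOfIntegers.ext (show (z ^ 2 / 2) ^ 4 = -15 from hS4)
  exact two_dvd_intTrace_of_sq_eq_two_mul hZ hZS ⟨-S ^ 3, -7, by linear_combination -hS⟩ w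

open Polynomial IntermediateField

theorem Algebra.trace_eq_neg_nextCoeff_of_adjoin_eq_top {K L : Type*} [Field K] [Field L]
    [Algebra K L] [FiniteDimensional K L] {x : L} (hx : K⟮x⟯ = ⊤) {p : K[X]} (hp : p.Monic)
    (hpx : aeval x p = 0) (hdeg : p.natDegree = finrank K L) :
    Algebra.trace K L x = -p.nextCoeff := by
  have hint : IsIntegral K x := .of_finite K x
  have hmin : p = minpoly K x := by
    refine minpoly.unique_of_degree_le_degree_minpoly _ _ hp hpx ?_
    rw [degree_eq_natDegree hp.ne_zero, degree_eq_natDegree (minpoly.ne_zero hint),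
      hdeg, ← adjoin.finrank hint, hx, finrank_top']
  rw [trace_eq_finrank_mul_minpoly_nextCoeff, hx, IntermediateField.finrank_top, ← hmin]
  simp

/-- `16 * twoDivOneSubPoly = (X - 2) ^ 8 + 15 * X ^ 8`, obtained by substituting `y = 1 - 2 / X`
into `y ^ 8 + 15`. -/
noncomputable def twoDivOneSubPoly : ℤ[X] :=
  X ^ 8 - X ^ 7 + 7 * X ^ 6 - 28 * X ^ 5 + 70 * X ^ 4 - 112 * X ^ 3 + 112 * X ^ 2 - 64 * X + 16

theorem twoDivOneSubPoly_monic : twoDivOneSubPoly.Monic := by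
  unfold twoDivOneSubPoly; monicity!

theorem twoDivOneSubPoly_natDegree : twoDivOneSubPoly.natDegree = 8 := by
  unfold twoDivOneSubPoly; compute_degree!

theorem twoDivOneSubPoly_nextCoeff : twoDivOneSubPoly.nextCoeff = -1 := by
  rw [nextCoeff_of_natDegree_pos (by rw [twoDivOneSubPoly_natDegree]; norm_num),
    twoDivOneSubPoly_natDegree]
  simp [twoDivOneSubPoly, coeff_X, coeff_X_pow]

theorem aeval_twoDivOneSubPoly {F : Type*} [Field F] [CharZero F] {y : F} (hy : y ^ 8 = -15) :
    aeval (2 / (1 - y)) twoDivOneSubPoly = 0 := by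
  have hy1 : 1 - y ≠ 0 := by
    intro h
    rw [← sub_eq_zero.1 h] at hy
    norm_num at hy
  set A := 2 / (1 - y)
  have hAy : A - 2 = A * y := by
    simp only [A]; field_simp; ring
  have h16 : (16 : F) * aeval A twoDivOneSubPoly = (A - 2) ^ 8 + 15 * A ^ 8 := by
    simp [twoDivOneSubPoly, map_ofNat]; ring
  rw [hAy, mul_pow, hy] at h16
  exact (mul_eq_zero.1 (h16.trans (by ring))).resolve_left (by norm_num)

theorem exists_intTrace_eq_one {F : Type*} [Field F] [NumberField F] {y : F} (hy : y ^ 8 = -15)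
    (hFy : Algebra.adjoin ℚ {y} = ⊤) (hF8 : finrank ℚ F = 8) :
    ∃ a : 𝓞 F, Algebra.intTrace ℤ (𝓞 F) a = 1 := by
  set A := 2 / (1 - y)
  have hA : aeval A twoDivOneSubPoly = 0 := aeval_twoDivOneSubPoly hy
  have hAtop : ℚ⟮A⟯ = ⊤ := by
    have hyA : y = 1 - 2 / A := by rw [div_div_cancel₀ two_ne_zero]; ring
    rw [eq_top_iff, ← adjoin_eq_top_of_algebra ℚ _ hFy, adjoin_simple_le_iff, hyA]
    exact sub_mem (one_mem _) (div_mem (ofNat_mem _ 2) (mem_adjoin_simple_self ℚ A))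
  have htr : Algebra.trace ℚ F A = 1 := by
    rw [Algebra.trace_eq_neg_nextCoeff_of_adjoin_eq_top hAtop (twoDivOneSubPoly_monic.map _)
      (by rwa [aeval_map_algebraMap])
      (by rw [twoDivOneSubPoly_monic.natDegree_map, twoDivOneSubPoly_natDegree, hF8]),
      nextCoeff_map (algebraMap ℤ ℚ).injective_int, twoDivOneSubPoly_nextCoeff]
    simp
  let a : 𝓞 F := ⟨A, twoDivOneSubPoly, twoDivOneSubPoly_monic, hA⟩
  have hatr := Algebra.algebraMap_intTrace (A := ℤ) (K := ℚ) (L := F) a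
  rw [show algebraMap (𝓞 F) F a = A from rfl, htr, algebraMap_int_eq, eq_intCast,
    Int.cast_eq_one] at hatr
  exact ⟨a, hatr⟩

theorem statement_7_general (F L : Type*) [Field F] [NumberField F] [Field L] [NumberField L]
    (y : F) (hy : y ^ 8 = -15) (hFy : Algebra.adjoin ℚ {y} = ⊤) (hF8 : finrank ℚ F = 8)
    (z : L) (hz : z ^ 8 = -240) :
    ¬ IntTraceEquiv F L := by
  rintro ⟨e, he⟩
  obtain ⟨a, ha⟩ := exists_intTrace_eq_one hy hFy hF8
  have h2 := two_dvd_intTrace_of_pow_eight_eq hz (e 1 * e a)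
  rw [he, one_mul, ha] at h2
  exact absurd h2 (by norm_num)

/-- Let `F = ℚ(y)` with `y⁸ = -15` and `L = ℚ(z)` with `z⁸ = -240` (both octic
fields). Then the integral trace forms of `F` and `L` are not equivalent. -/
theorem statement_7 (F L : Type*) [Field F] [NumberField F] [Field L] [NumberField L]
    (y : F) (hy : y ^ 8 = -15) (hFy : Algebra.adjoin ℚ {y} = ⊤) (hF8 : finrank ℚ F = 8)
    (z : L) (hz : z ^ 8 = -240) (hLz : Algebra.adjoin ℚ {z} = ⊤) (hL8 : finrank ℚ L = 8) :
    ¬ IntTraceEquiv F L :=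
  statement_7_general F L y hy hFy hF8 z hz
end

section
/- Let F and L be the septic fields defined by p_F = x⁷−3x⁶+4x⁴+x³−4x²−x+1 and p_L = x⁷−3x⁶+2x⁵+4x⁴−3x³−2x²−x−1. Then F and L are not isomorphic. -/
/-!
An isomorphism `F ≃ L` identifies the `ℚ`-algebra maps `F → ℚ_[2741]` with those `L → ℚ_[2741]`,
i.e. the roots of `p_F` in `ℚ_[2741]` with those of `p_L`. By Hensel's lemma `p_F` has (at least)
two `2741`-adic roots, lifting its simple roots `296` and `1445` modulo `2741`. On the other hand
`p_L ≡ (x - 221)(x - 658)²(x - 1027)²(x² + 847x + 83) mod 2741` with an irreducible quadratic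
factor. The double roots `658` and `1027` do not lift, because there `p_L' ≡ 0 mod 2741` but
`p_L ≢ 0 mod 2741²`, and the simple root `221` lifts uniquely. Since `p_L` is monic, all of its
roots in `ℚ_[2741]` are `2741`-adic integers, so `p_L` has only one root in `ℚ_[2741]`.
-/

open Polynomial

namespace AdjoinRoot

variable {R A : Type*} [CommRing R] [CommRing A] [Algebra R A]

noncomputable def algHomEquivRoots (f : R[X]) :
    (AdjoinRoot f →ₐ[R] A) ≃ {x : A // aeval x f = 0} where
  toFun φ := ⟨φ (root f), aeval_algHom_eq_zero f φ⟩
  invFun x := liftAlgHom f (Algebra.ofId R A) x x.2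
  left_inv := liftAlgHom_eq_algHom f
  right_inv _ := Subtype.ext (liftAlgHom_root ..)

noncomputable def rootsEquivOfAlgEquiv {f g : R[X]} (e : AdjoinRoot f ≃ₐ[R] AdjoinRoot g) :
    {x : A // aeval x f = 0} ≃ {x : A // aeval x g = 0} :=
  (algHomEquivRoots f).symm.trans ((e.arrowCongr AlgEquiv.refl).trans (algHomEquivRoots g))

end AdjoinRoot

theorem map_aeval_int {A B : Type*} [CommRing A] [CommRing B] (φ : A →+* B) (f : ℤ[X]) (x : A) :
    φ (aeval x f) = aeval (φ x) f :=
  (aeval_algHom_apply φ.toIntAlgHom x f).symm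

namespace PadicInt

variable {p : ℕ} [Fact p.Prime]

theorem coe_aeval (f : ℤ[X]) (x : ℤ_[p]) : ((aeval x f : ℤ_[p]) : ℚ_[p]) = aeval (x : ℚ_[p]) f :=
  map_aeval_int Coe.ringHom f x

theorem toZMod_eq_zero_iff_norm_lt_one {x : ℤ_[p]} : toZMod x = 0 ↔ ‖x‖ < 1 := by
  rw [← RingHom.mem_ker, ker_toZMod, IsLocalRing.mem_maximalIdeal, mem_nonunits]

theorem toZMod_eq_iff_norm_sub_lt_one {x y : ℤ_[p]} : toZMod x = toZMod y ↔ ‖x - y‖ < 1 := by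
  rw [← sub_eq_zero, ← map_sub, toZMod_eq_zero_iff_norm_lt_one]

theorem norm_eq_one_iff_toZMod_ne_zero {x : ℤ_[p]} : ‖x‖ = 1 ↔ toZMod x ≠ 0 := by
  rw [ne_eq, toZMod_eq_zero_iff_norm_lt_one, not_lt]
  exact ⟨ge_of_eq, (norm_le_one x).antisymm⟩

theorem existsUnique_aeval_eq_zero_toZMod_eq (f : ℤ[X]) {a : ZMod p} (ha : aeval a f = 0)
    (ha' : aeval a (derivative f) ≠ 0) : ∃! z : ℤ_[p], aeval z f = 0 ∧ toZMod z = a := by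
  set b : ℤ_[p] := (a.val : ℤ_[p])
  have hb : toZMod b = a := by simp [b]
  have hb' : ‖aeval b (derivative f)‖ = 1 := by
    rwa [norm_eq_one_iff_toZMod_ne_zero, map_aeval_int, hb]
  have hbf : ‖aeval b f‖ < ‖aeval b (derivative f)‖ ^ 2 := by
    rwa [hb', one_pow, ← toZMod_eq_zero_iff_norm_lt_one, map_aeval_int, hb]
  obtain ⟨z, hz, hzb, -, huniq⟩ := hensels_lemma hbf
  rw [hb'] at hzb huniq
  refine ⟨z, ⟨hz, ?_⟩, fun w ⟨hw, hwa⟩ => huniq w hw ?_⟩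
  · rwa [← hb, toZMod_eq_iff_norm_sub_lt_one]
  · rwa [← toZMod_eq_iff_norm_sub_lt_one, hb]

theorem aeval_ne_zero_of_toZMod_eq (f : ℤ[X]) {a : ℤ}
    (ha' : aeval (a : ZMod p) (derivative f) = 0) (ha : aeval (a : ZMod (p ^ 2)) f ≠ 0)
    {z : ℤ_[p]} (hz : toZMod z = a) : aeval z f ≠ 0 := by
  have hmem {x : ℤ_[p]} (hx : toZMod x = 0) : x ∈ IsLocalRing.maximalIdeal ℤ_[p] := by
    rwa [← ker_toZMod, RingHom.mem_ker]
  have hza := hmem (x := z - a) (by rw [map_sub, hz, map_intCast, sub_self])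
  have hd := hmem (x := aeval (a : ℤ_[p]) (derivative f)) (by rwa [map_aeval_int, map_intCast])
  -- Taylor: `f z = f a + f' a * (z - a) + k * (z - a) ^ 2`, whose last two terms lie in `𝔪 ^ 2`
  obtain ⟨k, hk⟩ := binomExpansion (f.map (algebraMap ℤ ℤ_[p])) a (z - a)
  simp only [eval_map_algebraMap, derivative_map, add_sub_cancel] at hk
  have hdiff : aeval z f - aeval (a : ℤ_[p]) f ∈ RingHom.ker (toZModPow 2 : ℤ_[p] →+* _) := by
    rw [ker_toZModPow, ← Ideal.span_singleton_pow, ← maximalIdeal_eq_span_p, hk, add_assoc,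
      add_sub_cancel_left, pow_two, pow_two]
    exact Ideal.add_mem _ (Ideal.mul_mem_mul hd hza)
      (Ideal.mul_mem_left _ _ (Ideal.mul_mem_mul hza hza))
  intro h
  rw [RingHom.mem_ker, map_sub, h, map_zero, zero_sub, neg_eq_zero, map_aeval_int,
    map_intCast] at hdiff
  exact ha hdiff

theorem exists_coe_eq_of_aeval_eq_zero {f : ℤ[X]} (hf : f.Monic) {x : ℚ_[p]}
    (hx : aeval x f = 0) : ∃ z : ℤ_[p], (z : ℚ_[p]) = x ∧ aeval z f = 0 := by
  have hint : IsIntegral ℤ_[p] x :=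
    ⟨f.map (algebraMap ℤ ℤ_[p]), hf.map _, by rwa [← aeval_def, aeval_map_algebraMap]⟩
  obtain ⟨z, rfl⟩ := IsIntegrallyClosed.isIntegral_iff.mp hint
  rw [algebraMap_apply, ← coe_aeval, coe_eq_zero] at hx
  exact ⟨z, algebraMap_apply z, hx⟩

end PadicInt

noncomputable def pF : ℤ[X] := X ^ 7 - 3 * X ^ 6 + 4 * X ^ 4 + X ^ 3 - 4 * X ^ 2 - X + 1

noncomputable def pL : ℤ[X] :=
  X ^ 7 - 3 * X ^ 6 + 2 * X ^ 5 + 4 * X ^ 4 - 3 * X ^ 3 - 2 * X ^ 2 - X - 1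

section Evaluation

variable {A : Type*} [CommRing A] (x : A)

theorem aeval_pF : aeval x pF = x ^ 7 - 3 * x ^ 6 + 4 * x ^ 4 + x ^ 3 - 4 * x ^ 2 - x + 1 := by
  simp [pF, map_ofNat]

theorem aeval_derivative_pF :
    aeval x (derivative pF) = 7 * x ^ 6 - 18 * x ^ 5 + 16 * x ^ 3 + 3 * x ^ 2 - 8 * x - 1 := by
  simp [pF, map_ofNat]; ring

theorem aeval_pL :
    aeval x pL = x ^ 7 - 3 * x ^ 6 + 2 * x ^ 5 + 4 * x ^ 4 - 3 * x ^ 3 - 2 * x ^ 2 - x - 1 := by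
  simp [pL, map_ofNat]

theorem aeval_derivative_pL : aeval x (derivative pL) =
    7 * x ^ 6 - 18 * x ^ 5 + 10 * x ^ 4 + 16 * x ^ 3 - 9 * x ^ 2 - 4 * x - 1 := by
  simp [pL, map_ofNat]; ring

end Evaluation

theorem pL_monic : pL.Monic := by
  unfold pL; monicity!

theorem map_pF :
    pF.map (algebraMap ℤ ℚ) = X ^ 7 - 3 * X ^ 6 + 4 * X ^ 4 + X ^ 3 - 4 * X ^ 2 - X + 1 := by
  simp [pF]

theorem map_pL : pL.map (algebraMap ℤ ℚ) =
    X ^ 7 - 3 * X ^ 6 + 2 * X ^ 5 + 4 * X ^ 4 - 3 * X ^ 3 - 2 * X ^ 2 - X - 1 := by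
  simp [pL]

instance : Fact (Nat.Prime 2741) := ⟨by norm_num⟩

open PadicInt

theorem aeval_pL_zmod_2741 (x : ZMod 2741) : aeval x pL =
    (x - 221) * (x - 658) ^ 2 * (x - 1027) ^ 2 * (x ^ 2 + 847 * x + 83) := by
  rw [aeval_pL, ← sub_eq_zero]
  ring_nf
  reduce_mod_char

theorem not_isSquare_1676 : ¬ IsSquare (1676 : ZMod 2741) := by
  rw [ZMod.euler_criterion 2741 (by decide)]
  decide +kernel

theorem eq_221_or_eq_658_or_eq_1027_of_aeval_pL_eq_zero {x : ZMod 2741} (hx : aeval x pL = 0) :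
    x = 221 ∨ x = 658 ∨ x = 1027 := by
  have hq : x ^ 2 + 847 * x + 83 ≠ 0 := by
    intro h
    -- `1676 = 847 ^ 2 - 4 * 83` is the discriminant of the quadratic factor
    refine not_isSquare_1676 ⟨2 * x + 847, ?_⟩
    linear_combination (norm := skip) -4 * h
    ring_nf; reduce_mod_char
  rw [aeval_pL_zmod_2741] at hx
  simp only [mul_eq_zero, pow_eq_zero_iff two_ne_zero, sub_eq_zero, hq, or_false] at hx
  tauto

theorem toZMod_eq_221_of_aeval_pL_eq_zero {z : ℤ_[2741]} (hz : aeval z pL = 0) :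
    toZMod z = 221 := by
  have hroot : aeval (toZMod z) pL = 0 := by rw [← map_aeval_int, hz, map_zero]
  rcases eq_221_or_eq_658_or_eq_1027_of_aeval_pL_eq_zero hroot with h | h | h
  · exact h
  · exact absurd hz (aeval_ne_zero_of_toZMod_eq pL (a := 658)
      (by rw [aeval_derivative_pL]; decide) (by rw [aeval_pL]; decide) (by rw [h]; rfl))
  · exact absurd hz (aeval_ne_zero_of_toZMod_eq pL (a := 1027)
      (by rw [aeval_derivative_pL]; decide) (by rw [aeval_pL]; decide) (by rw [h]; rfl))

theorem subsingleton_roots_pL : Subsingleton {x : ℚ_[2741] // aeval x pL = 0} := by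
  obtain ⟨z₀, -, huniq⟩ := existsUnique_aeval_eq_zero_toZMod_eq (p := 2741) pL (a := 221)
    (by rw [aeval_pL]; decide) (by rw [aeval_derivative_pL]; decide)
  refine ⟨fun x y => Subtype.ext ?_⟩
  obtain ⟨z, hzx, hz⟩ := exists_coe_eq_of_aeval_eq_zero pL_monic x.2
  obtain ⟨w, hwy, hw⟩ := exists_coe_eq_of_aeval_eq_zero pL_monic y.2
  rw [← hzx, ← hwy, huniq z ⟨hz, toZMod_eq_221_of_aeval_pL_eq_zero hz⟩,
    huniq w ⟨hw, toZMod_eq_221_of_aeval_pL_eq_zero hw⟩]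

theorem nontrivial_roots_pF : Nontrivial {x : ℚ_[2741] // aeval x pF = 0} := by
  obtain ⟨z₁, ⟨hz₁, hz₁'⟩, -⟩ := existsUnique_aeval_eq_zero_toZMod_eq (p := 2741) pF (a := 296)
    (by rw [aeval_pF]; decide) (by rw [aeval_derivative_pF]; decide)
  obtain ⟨z₂, ⟨hz₂, hz₂'⟩, -⟩ := existsUnique_aeval_eq_zero_toZMod_eq (p := 2741) pF (a := 1445)
    (by rw [aeval_pF]; decide) (by rw [aeval_derivative_pF]; decide)
  refine ⟨⟨z₁, by rw [← coe_aeval, hz₁, PadicInt.coe_zero]⟩,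
    ⟨z₂, by rw [← coe_aeval, hz₂, PadicInt.coe_zero]⟩, fun h => ?_⟩
  have hz : z₁ = z₂ := Subtype.ext (Subtype.mk.inj h)
  have : (296 : ZMod 2741) = 1445 := by rw [← hz₁', ← hz₂', hz]
  exact absurd this (by decide)

/-- The septic fields defined by `x⁷ - 3x⁶ + 4x⁴ + x³ - 4x² - x + 1` and
`x⁷ - 3x⁶ + 2x⁵ + 4x⁴ - 3x³ - 2x² - x - 1` are not isomorphic. -/
theorem statement_8 :
    ¬ Nonempty
      (AdjoinRoot (X ^ 7 - 3 * X ^ 6 + 4 * X ^ 4 + X ^ 3 - 4 * X ^ 2 - X + 1 : ℚ[X]) ≃ₐ[ℚ]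
        AdjoinRoot
          (X ^ 7 - 3 * X ^ 6 + 2 * X ^ 5 + 4 * X ^ 4 - 3 * X ^ 3 - 2 * X ^ 2 - X - 1 : ℚ[X])) := by
  rintro ⟨e⟩
  rw [← map_pF, ← map_pL] at e
  have hF := nontrivial_roots_pF
  have hL := subsingleton_roots_pL
  simp_rw [← aeval_map_algebraMap ℚ _ pF] at hF
  simp_rw [← aeval_map_algebraMap ℚ _ pL] at hL
  exact not_subsingleton _ (AdjoinRoot.rootsEquivOfAlgEquiv (A := ℚ_[2741]) e).subsingleton
end
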